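/- arXiv:2604.08080 — 3 statements merged into one kernel-verified Lean document; each statement's English description precedes it below -/
import Mathlib

section
/- Let J be a finite nonempty set of regimes, l: J × J → ℝ with l(i,i)=0 satisfying the strict triangular condition l(i,j)+l(j,k) > l(i,k) for i ≠ j, j ≠ k, and let Y: J → ℝ. Suppose σ: J → J is a 'best-switch' selection, i.e., for each j ∈ J, σ(j) maximizes q ↦ Y(q) − l(j,q) and, whenever σ(j) ≠ j, Y(j) = Y(σ(j)) − l(j,σ(j)). Define J_S := { j ∈ J : σ(j) = j }. Then (i) J_S is nonempty, and (ii) σ(j) ∈ J_S for every j ∈ J. -/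
/-- With strictly triangular switching costs (zero diagonal), if `σ` is a
best-switch selection (i.e. `σ j` maximizes `q ↦ Y q − l j q`, and
`Y j = Y (σ j) − l j (σ j)` whenever `σ j ≠ j`), then the set
`J_S = {j : σ j = j}` is nonempty and `σ j ∈ J_S` for every `j`. -/
theorem stmt_6 {J : Type*} [Fintype J] [Nonempty J] (l : J → J → ℝ)
    (hdiag : ∀ i, l i i = 0)
    (htri : ∀ i j k, i ≠ j → j ≠ k → l i k < l i j + l j k)
    (Y : J → ℝ) (σ : J → J)
    (hmax : ∀ j q, Y q - l j q ≤ Y (σ j) - l j (σ j))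
    (heq : ∀ j, σ j ≠ j → Y j = Y (σ j) - l j (σ j)) :
    (∃ j, σ j = j) ∧ (∀ j, σ (σ j) = σ j) := by
  have key : ∀ j, σ (σ j) = σ j := by
    intro j
    by_contra hr
    by_cases hq : σ j = j
    · rw [hq] at hr; exact hr hq
    · set q := σ j with hqdef
      set r := σ q with hrdef
      have h1 : Y j = Y q - l j q := heq j hq
      have h2 : Y q = Y r - l q r := heq q hr
      have htri' : l j r < l j q + l q r := htri j q r (Ne.symm hq) (Ne.symm hr)
      have h3 : Y r - l j r ≤ Y q - l j q := hmax j r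
      rw [h2] at h3
      linarith
  exact ⟨⟨σ (Classical.arbitrary J), key _⟩, key⟩
end

section
/- Under the setting of the previous statement (finite J, strictly triangular costs l with zero diagonal, Y: J → ℝ, selection σ with fixed-point set J_S such that Y(j) = Y(σ(j)) − l(j,σ(j)) when σ(j) ≠ j and σ(j) ∈ J_S for all j): for every i ∈ J, max_{j∈J} (Y(j) − l(i,j)) = max_{j∈J_S} (Y(j) − l(i,j)). -/
/-- With strictly triangular switching costs (zero diagonal), a best-switch selection `σ`
whose values are non-switching regimes (`σ (σ j) = σ j`), and
`Y j = Y (σ j) − l j (σ j)` whenever `σ j ≠ j`: for every `i`,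
`max_{j∈J} (Y j − l i j) = max_{j∈J_S} (Y j − l i j)` where `J_S = {j : σ j = j}`. -/
theorem stmt_7 {J : Type*} [Fintype J] [Nonempty J] [DecidableEq J] (l : J → J → ℝ)
    (hdiag : ∀ i, l i i = 0)
    (htri : ∀ i j k, i ≠ j → j ≠ k → l i k < l i j + l j k)
    (Y : J → ℝ) (σ : J → J)
    (hmax : ∀ j q, Y q - l j q ≤ Y (σ j) - l j (σ j))
    (heq : ∀ j, σ j ≠ j → Y j = Y (σ j) - l j (σ j))
    (hfix : ∀ j, σ (σ j) = σ j) (i : J) :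
    Finset.univ.sup' Finset.univ_nonempty (fun j => Y j - l i j)
      = (Finset.univ.filter fun j => σ j = j).sup'
          ⟨σ (Classical.arbitrary J),
            Finset.mem_filter.mpr ⟨Finset.mem_univ _, hfix _⟩⟩
          (fun j => Y j - l i j) := by
  apply le_antisymm
  · apply Finset.sup'_le
    intro j _
    by_cases hj : σ j = j
    · have hm : j ∈ Finset.univ.filter (fun j => σ j = j) :=
        Finset.mem_filter.mpr ⟨Finset.mem_univ _, hj⟩
      exact Finset.le_sup' (fun j => Y j - l i j) hm
    · have key : Y j - l i j ≤ Y (σ j) - l i (σ j) := by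
        rw [heq j hj]
        by_cases hij : i = j
        · subst hij; rw [hdiag]; ring_nf; simp
        · have := htri i j (σ j) hij (fun h => hj h.symm)
          linarith
      have hm : σ j ∈ Finset.univ.filter (fun j => σ j = j) :=
        Finset.mem_filter.mpr ⟨Finset.mem_univ _, hfix j⟩
      exact key.trans (Finset.le_sup' (fun j => Y j - l i j) hm)
  · exact Finset.sup'_le _ (fun j => Y j - l i j) fun j _ => Finset.le_sup' (fun j => Y j - l i j) (Finset.mem_univ j)
end

section
/- Let N ∈ ℕ, J a finite set, and consider the backward recursion Y^i_N := Φ^i and Y^i_n := max_{j∈J} ( c^{ij}_n + y^j_n ) for n < N, where y^j_n := E[ r^j_n + Y^j_{n+1} | F_n ] for integrable F-measurable random variables r^j_n and F_n-measurable c^{ij}_n with c^{ii}_n = 0, on a filtered probability space with discrete filtration (F_n). Suppose M^j are (F_n)-martingales with M^j_{n+1} − M^j_n = (r^j_n + Y^j_{n+1}) − E[r^j_n + Y^j_{n+1} | F_n] for all n, j (i.e., the Doob martingales of the continuation values). Define Ũ^i_N(M) := Φ^i and Ũ^i_n(M) := max_{j∈J} ( c^{ij}_n + r^j_n + Ũ^j_{n+1}(M)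 − (M^j_{n+1} − M^j_n) ). Then Ũ^i_n(M) = Y^i_n almost surely for all i, n. -/
open MeasureTheory

/-- Discrete strong duality with Doob-martingale penalties (surely optimal): if the
value process satisfies the backward recursion
`Y^i_N = Φ^i`, `Y^i_n = max_j (c^{ij}_n + E[r^j_n + Y^j_{n+1} | F_n])`, and `M^j` are
the Doob martingales of the continuation values, then the pathwise dual recursion
`Ũ^i_N(M) = Φ^i`, `Ũ^i_n(M) = max_j (c^{ij}_n + r^j_n + Ũ^j_{n+1}(M) − ΔM^j_n)`
reproduces the value process: `Ũ^i_n(M) = Y^i_n` a.s. for all `i, n ≤ N`. -/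
theorem stmt_14 {Ω : Type*} {m0 : MeasurableSpace Ω} {μ : Measure Ω} [IsProbabilityMeasure μ]
    {J : Type*} [Fintype J] [Nonempty J]
    (ℱ : Filtration ℕ m0) (N : ℕ)
    (Φ : J → Ω → ℝ) (r : J → ℕ → Ω → ℝ) (c : J → J → ℕ → Ω → ℝ)
    (hcdiag : ∀ i n, c i i n = fun _ => (0 : ℝ))
    (hc_meas : ∀ i j n, StronglyMeasurable[ℱ n] (c i j n))
    (hr_int : ∀ j n, Integrable (r j n) μ)
    (hΦ_int : ∀ i, Integrable (Φ i) μ)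
    (Y : J → ℕ → Ω → ℝ)
    (hY_int : ∀ i n, Integrable (Y i n) μ)
    (hYN : ∀ i, Y i N = Φ i)
    (hYrec : ∀ i n, n < N →
      Y i n =ᵐ[μ] fun ω => Finset.univ.sup' Finset.univ_nonempty
        (fun j => c i j n ω + (μ[fun ω' => r j n ω' + Y j (n + 1) ω' | ℱ n]) ω))
    (M : J → ℕ → Ω → ℝ)
    (hM : ∀ j, Martingale (M j) ℱ μ)
    (hDoob : ∀ j n, n < N →
      (fun ω => M j (n + 1) ω - M j n ω)
        =ᵐ[μ] fun ω => (r j n ω + Y j (n + 1) ω)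
          - (μ[fun ω' => r j n ω' + Y j (n + 1) ω' | ℱ n]) ω)
    (U : J → ℕ → Ω → ℝ)
    (hUN : ∀ i, U i N = Φ i)
    (hUrec : ∀ i n, n < N →
      U i n = fun ω => Finset.univ.sup' Finset.univ_nonempty
        (fun j => c i j n ω + r j n ω + U j (n + 1) ω - (M j (n + 1) ω - M j n ω))) :
    ∀ i n, n ≤ N → U i n =ᵐ[μ] Y i n := by
  have key : ∀ k, k ≤ N → ∀ i, U i (N - k) =ᵐ[μ] Y i (N - k) := by
    intro k
    induction k with
    | zero =>
      intro _ i
      simp only [Nat.sub_zero, hUN i, hYN i]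
      exact Filter.EventuallyEq.rfl
    | succ k ih =>
      intro hk i
      have hk' : k ≤ N := le_of_lt hk
      set n := N - (k + 1) with hn
      have hn1 : n + 1 = N - k := by omega
      have hnN : n < N := by omega
      have hIH : ∀ j, U j (n + 1) =ᵐ[μ] Y j (n + 1) := by
        intro j; rw [hn1]; exact ih hk' j
      have hall : ∀ᵐ ω ∂μ, ∀ j : J,
          (M j (n + 1) ω - M j n ω = (r j n ω + Y j (n + 1) ω)
            - (μ[fun ω' => r j n ω' + Y j (n + 1) ω' | ℱ n]) ω)
          ∧ U j (n + 1) ω = Y j (n + 1) ω := by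
        rw [MeasureTheory.ae_all_iff]
        intro j
        filter_upwards [hDoob j n hnN, hIH j] with ω h1 h2 using ⟨h1, h2⟩
      filter_upwards [hall, hYrec i n hnN] with ω h hy
      rw [hUrec i n hnN, hy]
      exact Finset.sup'_congr _ rfl fun j _ => by
        rw [(h j).1, (h j).2]; ring
  intro i n hn
  have : n = N - (N - n) := by omega
  rw [this]
  exact key (N - n) (by omega) i
end
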